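/- arXiv:2204.02724 — 3 statements merged into one kernel-verified Lean document; each statement's English description precedes it below -/
import Mathlib

section
/- Let ς > 2, C₀ > 0 and d ≥ 0 an integer, and let γ : ℤ → ℂ satisfy |γ(ℓ)| ≤ C₀(1+|ℓ|)^{−ς} for all ℓ ∈ ℤ. Define σ(ω) = (2π)^{−1} Σ_{ℓ∈ℤ} γ(ℓ) e^{−iℓω} and, for an integer m ≥ 1, the Fourier frequencies ω_l = 2πl/(2m+1) for −m ≤ l ≤ m. Then there exists a constant C_d > 0 depending only on C₀, ς and d such that for every m ≥ 1 and every integer ℓ₀ with |ℓ₀| ≤ d, the discretized inverse Fourier transform satisfies |(2π/(2m+1)) Σ_{l=−m}^m σ(ω_l) e^{iω_l ℓ₀} − γ(ℓ₀)| ≤ C_d/m. -/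
/-!
Since `γ` is absolutely summable, the quadrature sum can be evaluated term by term, and the
orthogonality of the characters `l ↦ exp (2πilk/(2m+1))` on `{-m, …, m}` turns it into the
aliased sum `∑ₖ γ(ℓ₀ + k(2m+1))`. The error is the part of that sum with `k ≠ 0`; by Peetre's
inequality `(1 + |x + y|)⁻ˢ ≤ (1 + |y|)ˢ (1 + |x|)⁻ˢ` each of its terms is at most
`C₀ (1 + d)^ς |k|^(-ς) / m`.
-/

open scoped Real

open Finset Complex

local notation "ω[" m ", " l "]" => (((2 * π * (l : ℝ) / (2 * (m : ℝ) + 1) : ℝ)) : ℂ)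

theorem sum_Icc_zpow_of_pow_eq_one {K : Type*} [Field K] [DecidableEq K] {ζ : K} (m : ℕ)
    (hζ : ζ ^ (2 * m + 1) = 1) :
    ∑ l ∈ Icc (-(m : ℤ)) m, ζ ^ l = if ζ = 1 then (2 * m + 1 : K) else 0 := by
  have hlen : ((m : ℤ) + 1 - -(m : ℤ)).toNat = 2 * m + 1 := by omega
  split_ifs with h1
  · rw [h1]
    simp only [one_zpow, sum_const, Int.card_Icc, hlen, nsmul_eq_mul, mul_one]
    push_cast
    ring
  · have hζ0 : ζ ≠ 0 := by rintro rfl; simp at hζ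
    rw [Int.Icc_eq_finset_map, sum_map, hlen]
    simp only [Function.Embedding.trans_apply, Nat.castEmbedding_apply, addLeftEmbedding_apply,
      zpow_add₀ hζ0, zpow_natCast, ← mul_sum, geom_sum_eq h1, hζ, sub_self, zero_div, mul_zero]

theorem sum_Icc_exp_fourierFreq (m : ℕ) (k : ℤ) :
    ∑ l ∈ Icc (-(m : ℤ)) m, exp (I * ω[m, l] * k) =
      if (2 * m + 1 : ℤ) ∣ k then (2 * m + 1 : ℂ) else 0 := by
  have hζ := isPrimitiveRoot_exp (2 * m + 1) (by omega)
  set ζ := exp (2 * π * I / (2 * m + 1 : ℕ))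
  have hterm (l : ℤ) : exp (I * ω[m, l] * k) = (ζ ^ k) ^ l := by
    rw [← zpow_mul, ← exp_int_mul]
    congr 1
    push_cast
    ring
  have hdvd : ζ ^ k = 1 ↔ (2 * m + 1 : ℤ) ∣ k := by
    exact_mod_cast hζ.zpow_eq_one_iff_dvd k
  simp_rw [hterm, ← hdvd]
  convert sum_Icc_zpow_of_pow_eq_one m ?_
  rw [← zpow_natCast, ← zpow_mul, mul_comm, zpow_mul, zpow_natCast, hζ.pow_eq_one, one_zpow]

theorem tsum_ite_dvd_sub {E : Type*} [AddCommMonoid E] [TopologicalSpace E] {N : ℤ} (hN : N ≠ 0)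
    (f : ℤ → E) (a : ℤ) :
    ∑' n, (if N ∣ a - n then f n else 0) = ∑' k, f (a + k * N) := by
  have hinj : Function.Injective (fun k : ℤ => a + k * N) := fun k k' h => by
    simpa [hN] using h
  refine (hinj.tsum_eq fun n hn => ?_).symm.trans (tsum_congr fun k => ?_)
  · obtain ⟨t, ht⟩ : N ∣ a - n := by
      by_contra h
      exact hn (if_neg h)
    exact ⟨-t, by simp only; linarith⟩
  · simp

theorem quadrature_eq_tsum_aliased {γ : ℤ → ℂ} (hγ : Summable γ) (m : ℕ) (ℓ₀ : ℤ) :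
    (2 * (π : ℂ)) / (2 * (m : ℂ) + 1) *
        (∑ l ∈ Icc (-(m : ℤ)) (m : ℤ),
          ((2 * (π : ℂ))⁻¹ * ∑' ℓ : ℤ, γ ℓ * exp (-(I * (ℓ : ℂ) * ω[m, l]))) *
            exp (I * ω[m, l] * (ℓ₀ : ℂ))) =
      ∑' k : ℤ, γ (ℓ₀ + k * (2 * m + 1)) := by
  have hN : (2 * (m : ℂ) + 1) ≠ 0 := by exact_mod_cast (by omega : 2 * m + 1 ≠ 0)
  have hsummable (l : ℤ) : Summable fun ℓ => γ ℓ * exp (I * ω[m, l] * ((ℓ₀ - ℓ : ℤ) : ℂ)) := by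
    refine hγ.norm.of_norm_bounded fun ℓ => ?_
    rw [norm_mul, show I * ω[m, l] * ((ℓ₀ - ℓ : ℤ) : ℂ) =
      I * ((2 * π * l / (2 * m + 1) * (ℓ₀ - ℓ : ℤ) : ℝ) : ℂ) by push_cast; ring,
      norm_exp_I_mul_ofReal, mul_one]
  calc _ = (2 * (m : ℂ) + 1)⁻¹ * ∑ l ∈ Icc (-(m : ℤ)) m,
        ∑' ℓ, γ ℓ * exp (I * ω[m, l] * ((ℓ₀ - ℓ : ℤ) : ℂ)) := by
        rw [div_eq_mul_inv, mul_comm (2 * (π : ℂ)), mul_assoc, mul_sum]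
        congr 1
        refine sum_congr rfl fun l _ => ?_
        rw [← mul_assoc, ← mul_assoc, mul_inv_cancel₀ (by simp [Real.pi_ne_zero]), one_mul,
          ← tsum_mul_right]
        refine tsum_congr fun ℓ => ?_
        rw [mul_assoc, ← exp_add]
        push_cast
        ring_nf
    _ = ∑' ℓ, γ ℓ * ((2 * (m : ℂ) + 1)⁻¹ * ∑ l ∈ Icc (-(m : ℤ)) m,
          exp (I * ω[m, l] * ((ℓ₀ - ℓ : ℤ) : ℂ))) := by
        rw [← Summable.tsum_finsetSum fun l _ => hsummable l, ← tsum_mul_left]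
        refine tsum_congr fun ℓ => ?_
        rw [← mul_sum]
        ring
    _ = ∑' ℓ, (if (2 * m + 1 : ℤ) ∣ ℓ₀ - ℓ then γ ℓ else 0) := by
        refine tsum_congr fun ℓ => ?_
        rw [sum_Icc_exp_fourierFreq]
        split_ifs
        · field_simp
        · simp
    _ = _ := tsum_ite_dvd_sub (by omega) _ _

theorem one_add_abs_add_rpow_neg_le (x y : ℝ) {s : ℝ} (hs : 0 ≤ s) :
    (1 + |x + y|) ^ (-s) ≤ (1 + |y|) ^ s * (1 + |x|) ^ (-s) := by
  have hpeetre : (1 + |x|) / (1 + |y|) ≤ 1 + |x + y| := by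
    rw [div_le_iff₀ (by positivity)]
    have : |x| ≤ |x + y| + |y| := by simpa using abs_sub (x + y) y
    nlinarith [abs_nonneg (x + y), abs_nonneg y]
  calc (1 + |x + y|) ^ (-s) ≤ ((1 + |x|) / (1 + |y|)) ^ (-s) :=
        Real.rpow_le_rpow_of_nonpos (by positivity) hpeetre (by linarith)
    _ = (1 + |y|) ^ s * (1 + |x|) ^ (-s) := by
        rw [Real.div_rpow (by positivity) (by positivity), Real.rpow_neg (by positivity) s,
          Real.rpow_neg (by positivity) s, div_inv_eq_mul, mul_comm]

theorem summable_one_add_abs_int_rpow_neg {s : ℝ} (hs : 1 < s) :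
    Summable fun n : ℤ => (1 + |(n : ℝ)|) ^ (-s) := by
  refine (Real.summable_abs_int_rpow hs).of_norm_bounded_eventually ?_
  filter_upwards [(Set.finite_singleton (0 : ℤ)).compl_mem_cofinite] with n hn
  have hn : (1 : ℝ) ≤ |(n : ℝ)| := by exact_mod_cast Int.one_le_abs hn
  rw [Real.norm_of_nonneg (by positivity)]
  exact Real.rpow_le_rpow_of_nonpos (by linarith) (by linarith) (by linarith)

section Aliasing

variable {γ : ℤ → ℂ} {C₀ ς : ℝ} {m d : ℕ} {ℓ₀ : ℤ}

theorem norm_apply_add_mul_le (hγ : ∀ ℓ : ℤ, ‖γ ℓ‖ ≤ C₀ * (1 + |(ℓ : ℝ)|) ^ (-ς))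
    (hς : 1 ≤ ς) (hm : 1 ≤ m) (hℓ₀ : |ℓ₀| ≤ d) {k : ℤ} (hk : k ≠ 0) :
    ‖γ (ℓ₀ + k * (2 * m + 1))‖ ≤ C₀ * (1 + d) ^ ς / m * |(k : ℝ)| ^ (-ς) := by
  have hC₀ : 0 ≤ C₀ := (norm_nonneg _).trans ((hγ 0).trans_eq (by simp))
  have hm' : (1 : ℝ) ≤ m := by exact_mod_cast hm
  have hk' : (1 : ℝ) ≤ |(k : ℝ)| := by exact_mod_cast Int.one_le_abs hk
  have hd : |(ℓ₀ : ℝ)| ≤ d := by exact_mod_cast hℓ₀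
  have hkm : |(k : ℝ)| * m ≤ 1 + |k * (2 * m + 1 : ℝ)| := by
    rw [abs_mul, abs_of_pos (by positivity : (0 : ℝ) < 2 * m + 1)]
    nlinarith
  calc ‖γ (ℓ₀ + k * (2 * m + 1))‖
      ≤ C₀ * (1 + |(k * (2 * m + 1) + ℓ₀ : ℝ)|) ^ (-ς) := by
        simpa [add_comm] using hγ (ℓ₀ + k * (2 * m + 1))
    _ ≤ C₀ * ((1 + |(ℓ₀ : ℝ)|) ^ ς * (1 + |k * (2 * m + 1 : ℝ)|) ^ (-ς)) := by
        gcongr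
        exact one_add_abs_add_rpow_neg_le _ _ (by linarith)
    _ ≤ C₀ * ((1 + d) ^ ς * (|(k : ℝ)| * m) ^ (-ς)) := by
        have hℓ₀' : (1 + |(ℓ₀ : ℝ)|) ^ ς ≤ (1 + d) ^ ς := by gcongr
        have hkm' := Real.rpow_le_rpow_of_nonpos (by positivity) hkm (by linarith : -ς ≤ 0)
        exact mul_le_mul_of_nonneg_left (mul_le_mul hℓ₀' hkm' (by positivity) (by positivity)) hC₀
    _ ≤ C₀ * ((1 + d) ^ ς * (|(k : ℝ)| ^ (-ς) * (m : ℝ) ^ (-1 : ℝ))) := by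
        rw [Real.mul_rpow (by positivity) (by positivity)]
        gcongr
    _ = C₀ * (1 + d) ^ ς / m * |(k : ℝ)| ^ (-ς) := by
        rw [Real.rpow_neg_one]
        ring

theorem norm_tsum_aliased_sub_le (hγ : ∀ ℓ : ℤ, ‖γ ℓ‖ ≤ C₀ * (1 + |(ℓ : ℝ)|) ^ (-ς))
    (hς : 1 < ς) (hm : 1 ≤ m) (hℓ₀ : |ℓ₀| ≤ d) :
    ‖∑' k : ℤ, γ (ℓ₀ + k * (2 * m + 1)) - γ ℓ₀‖ ≤
      C₀ * (1 + d) ^ ς * (∑' k : ℤ, |(k : ℝ)| ^ (-ς)) / m := by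
  have hsummable : Summable γ :=
    ((summable_one_add_abs_int_rpow_neg hς).mul_left C₀).of_norm_bounded hγ
  have hinj : Function.Injective fun k : ℤ => ℓ₀ + k * (2 * m + 1) := fun k k' h =>
    mul_right_cancel₀ (by omega) (add_left_cancel h)
  rw [Summable.tsum_eq_add_tsum_ite (f := fun k : ℤ => γ (ℓ₀ + k * (2 * m + 1)))
    (hsummable.comp_injective hinj) 0]
  simp only [zero_mul, add_zero, add_sub_cancel_left]
  rw [mul_div_right_comm]
  -- `|0| ^ (-ς) = 0` in Lean, so the dominating series has no `k = 0` term either.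
  refine tsum_of_norm_bounded ((Real.summable_abs_int_rpow hς).hasSum.mul_left _) fun k => ?_
  split_ifs with hk
  · simp [hk, Real.zero_rpow (by linarith : -ς ≠ 0)]
  · exact norm_apply_add_mul_le hγ hς.le hm hℓ₀ hk

end Aliasing

/-- The quadrature error bound from the proof of Theorem 4.2 of the paper: there is
a constant `C_d` depending only on `C₀`, `ς` and `d` such that the discretized
inverse Fourier transform of the spectral density at the Fourier frequencies
`ω_l = 2πl/(2m+1)` recovers the lag-`ℓ₀` autocovariance up to an error `C_d/m`,
uniformly over `|ℓ₀| ≤ d`. -/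
theorem stmt7 (ς C₀ : ℝ) (hς : 2 < ς) (hC₀ : 0 < C₀) (d : ℕ) :
    ∃ Cd : ℝ, 0 < Cd ∧
      ∀ γ : ℤ → ℂ, (∀ ℓ : ℤ, ‖γ ℓ‖ ≤ C₀ * (1 + |(ℓ : ℝ)|) ^ (-ς)) →
        ∀ m : ℕ, 1 ≤ m → ∀ ℓ₀ : ℤ, |ℓ₀| ≤ (d : ℤ) →
          ‖(2 * (π : ℂ)) / (2 * (m : ℂ) + 1) *
              (∑ l ∈ Finset.Icc (-(m : ℤ)) (m : ℤ),
                ((2 * (π : ℂ))⁻¹ * ∑' ℓ : ℤ, γ ℓ *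
                    Complex.exp
                      (-(Complex.I * (ℓ : ℂ) * ((2 * π * (l : ℝ) / (2 * (m : ℝ) + 1) : ℝ) : ℂ)))) *
                  Complex.exp
                    (Complex.I * ((2 * π * (l : ℝ) / (2 * (m : ℝ) + 1) : ℝ) : ℂ) * (ℓ₀ : ℂ))) -
            γ ℓ₀‖ ≤ Cd / m := by
  have hS : 0 < ∑' k : ℤ, |(k : ℝ)| ^ (-ς) :=
    (Real.summable_abs_int_rpow (by linarith)).tsum_pos (fun _ => by positivity) 1 (by norm_num)
  refine ⟨C₀ * (1 + d) ^ ς * ∑' k : ℤ, |(k : ℝ)| ^ (-ς), by positivity, fun γ hγ m hm ℓ₀ hℓ₀ => ?_⟩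
  have hsummable : Summable γ :=
    ((summable_one_add_abs_int_rpow_neg (by linarith)).mul_left C₀).of_norm_bounded hγ
  rw [quadrature_eq_tsum_aliased hsummable]
  exact norm_tsum_aliased_sub_le hγ (by linarith) hm hℓ₀
end

section
/- Let N ≥ 1 be an integer, let Ĝ, G ∈ ℝ^{N×N}, ĝ, g ∈ ℝ^N, and let β ∈ ℝ^N satisfy Gβ = g. Suppose λ > 0 satisfies |β|_1 · |Ĝ − G|_∞ + |ĝ − g|_∞ ≤ λ. Then: (a) β is feasible, i.e. |Ĝβ − ĝ|_∞ ≤ λ; and (b) any β̂ ∈ ℝ^N that minimizes |b|_1 over the set {b ∈ ℝ^N : |Ĝb − ĝ|_∞ ≤ λ} satisfies |β̂|_1 ≤ |β|_1 and |G(β̂ − β)|_∞ ≤ 2λ. -/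
open Matrix

/-!
Write `E = Ĝ - G` and `e = ĝ - g`. For every `b`, the empirical residual `Ĝb - ĝ` differs from
the population residual `Gb - g` by `Eb - e`, whose entries are at most `|b|₁ |E|_∞ + |e|_∞`.
At `b = β` the population residual vanishes, so `β` is feasible; hence a minimizer `β̂` has
`|β̂|₁ ≤ |β|₁`, and `G(β̂ - β) = Gβ̂ - g` is within `|β|₁ |E|_∞ + |e|_∞ ≤ λ` of the feasible
residual `Ĝβ̂ - ĝ`, itself bounded by `λ`.
-/

section

variable {m n : Type*}

lemma iSup_abs_nonneg (v : n → ℝ) : 0 ≤ ⨆ i, |v i| :=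
  Real.iSup_nonneg fun _ => abs_nonneg _

lemma iSup_iSup_abs_nonneg (A : Matrix m n ℝ) : 0 ≤ ⨆ i, ⨆ j, |A i j| :=
  Real.iSup_nonneg fun _ => Real.iSup_nonneg fun _ => abs_nonneg _

variable [Fintype m] [Fintype n]

lemma abs_le_iSup_abs (v : n → ℝ) (i : n) : |v i| ≤ ⨆ i, |v i| :=
  le_ciSup (f := fun i => |v i|) (Set.finite_range _).bddAbove i

lemma abs_le_iSup_iSup_abs (A : Matrix m n ℝ) (i : m) (j : n) :
    |A i j| ≤ ⨆ i, ⨆ j, |A i j| :=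
  (abs_le_iSup_abs (A i) j).trans
    (le_ciSup (f := fun i => ⨆ j, |A i j|) (Set.finite_range _).bddAbove i)

lemma abs_mulVec_le (A : Matrix m n ℝ) (b : n → ℝ) (i : m) :
    |(A *ᵥ b) i| ≤ (∑ j, |b j|) * ⨆ i, ⨆ j, |A i j| :=
  calc |(A *ᵥ b) i| ≤ ∑ j, |A i j| * |b j| := by
        simpa only [mulVec, dotProduct, abs_mul] using
          Finset.abs_sum_le_sum_abs (fun j => A i j * b j) .univ
    _ ≤ ∑ j, (⨆ i, ⨆ j, |A i j|) * |b j| := by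
        gcongr with j
        exact abs_le_iSup_iSup_abs A i j
    _ = (∑ j, |b j|) * ⨆ i, ⨆ j, |A i j| := by rw [← Finset.mul_sum, mul_comm]

lemma abs_residual_sub_residual_le (Ĝ G : Matrix m n ℝ) (ĝ g : m → ℝ) (b : n → ℝ) (i : m) :
    |(Ĝ *ᵥ b - ĝ) i - (G *ᵥ b - g) i| ≤
      (∑ j, |b j|) * (⨆ i, ⨆ j, |Ĝ i j - G i j|) + ⨆ i, |ĝ i - g i| := by
  have hsplit : (Ĝ *ᵥ b - ĝ) i - (G *ᵥ b - g) i = ((Ĝ - G) *ᵥ b) i - (ĝ i - g i) := by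
    simp only [sub_mulVec, Pi.sub_apply]
    ring
  rw [hsplit]
  exact (abs_sub _ _).trans
    (add_le_add (abs_mulVec_le (Ĝ - G) b i) (abs_le_iSup_abs (ĝ - g) i))

variable {Ĝ G : Matrix m n ℝ} {ĝ g : m → ℝ} {β : n → ℝ} {lam : ℝ}

lemma iSup_abs_residual_le_of_mulVec_eq (hβ : G *ᵥ β = g)
    (hcond : (∑ j, |β j|) * (⨆ i, ⨆ j, |Ĝ i j - G i j|) + (⨆ i, |ĝ i - g i|) ≤ lam) :
    (⨆ i, |(Ĝ *ᵥ β - ĝ) i|) ≤ lam := by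
  have hlam : 0 ≤ lam := le_trans (add_nonneg (mul_nonneg
    (Finset.sum_nonneg fun _ _ => abs_nonneg _) (iSup_iSup_abs_nonneg (Ĝ - G)))
    (iSup_abs_nonneg (ĝ - g))) hcond
  refine Real.iSup_le (fun i => ?_) hlam
  simpa [hβ] using (abs_residual_sub_residual_le Ĝ G ĝ g β i).trans hcond

lemma iSup_abs_mulVec_sub_le_two_mul (hβ : G *ᵥ β = g)
    (hcond : (∑ j, |β j|) * (⨆ i, ⨆ j, |Ĝ i j - G i j|) + (⨆ i, |ĝ i - g i|) ≤ lam)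
    {b : n → ℝ} (hb : (⨆ i, |(Ĝ *ᵥ b - ĝ) i|) ≤ lam) (hl1 : ∑ j, |b j| ≤ ∑ j, |β j|) :
    (⨆ i, |(G *ᵥ (b - β)) i|) ≤ 2 * lam := by
  refine Real.iSup_le (fun i => ?_) (by linarith [(iSup_abs_nonneg _).trans hb])
  have hperturb : |(Ĝ *ᵥ b - ĝ) i - (G *ᵥ b - g) i| ≤ lam := by
    refine (abs_residual_sub_residual_le Ĝ G ĝ g b i).trans (le_trans ?_ hcond)
    gcongr
    exact iSup_iSup_abs_nonneg (Ĝ - G)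
  calc |(G *ᵥ (b - β)) i|
      = |(Ĝ *ᵥ b - ĝ) i - ((Ĝ *ᵥ b - ĝ) i - (G *ᵥ b - g) i)| := by
        rw [mulVec_sub, hβ, sub_sub_cancel]
    _ ≤ |(Ĝ *ᵥ b - ĝ) i| + |(Ĝ *ᵥ b - ĝ) i - (G *ᵥ b - g) i| := abs_sub _ _
    _ ≤ lam + lam := add_le_add ((abs_le_iSup_abs _ i).trans hb) hperturb
    _ = 2 * lam := by ring

end

theorem stmt8_general (N : ℕ) (Ghat G : Matrix (Fin N) (Fin N) ℝ)
    (ghat g β : Fin N → ℝ) (hβ : G *ᵥ β = g) (lam : ℝ)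
    (hcond : (∑ i, |β i|) * (⨆ i, ⨆ j, |Ghat i j - G i j|) + (⨆ i, |ghat i - g i|) ≤ lam) :
    (⨆ i, |(Ghat *ᵥ β - ghat) i|) ≤ lam ∧
    ∀ βhat : Fin N → ℝ,
      (⨆ i, |(Ghat *ᵥ βhat - ghat) i|) ≤ lam →
      (∀ b : Fin N → ℝ, (⨆ i, |(Ghat *ᵥ b - ghat) i|) ≤ lam → ∑ i, |βhat i| ≤ ∑ i, |b i|) →
      (∑ i, |βhat i| ≤ ∑ i, |β i| ∧ (⨆ i, |(G *ᵥ (βhat - β)) i|) ≤ 2 * lam) := by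
  have hfeas := iSup_abs_residual_le_of_mulVec_eq hβ hcond
  refine ⟨hfeas, fun βhat hβhat hmin => ?_⟩
  have hl1 := hmin β hfeas
  exact ⟨hl1, iSup_abs_mulVec_sub_le_two_mul hβ hcond hβhat hl1⟩

/-- The deterministic core of Proposition H.2 of the paper: if `Gβ = g` and the
estimation errors satisfy `|β|₁ |Ĝ − G|_∞ + |ĝ − g|_∞ ≤ λ`, then `β` is feasible
for the ℓ1-regularised Yule–Walker (Dantzig-selector) problem, and any minimizer
`β̂` of the ℓ1 norm over the feasible set satisfies `|β̂|₁ ≤ |β|₁` and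
`|G(β̂ − β)|_∞ ≤ 2λ`. -/
theorem stmt8 (N : ℕ) (hN : 1 ≤ N) (Ghat G : Matrix (Fin N) (Fin N) ℝ)
    (ghat g β : Fin N → ℝ) (hβ : G *ᵥ β = g) (lam : ℝ) (hlam : 0 < lam)
    (hcond : (∑ i, |β i|) * (⨆ i, ⨆ j, |Ghat i j - G i j|) + (⨆ i, |ghat i - g i|) ≤ lam) :
    (⨆ i, |(Ghat *ᵥ β - ghat) i|) ≤ lam ∧
    ∀ βhat : Fin N → ℝ,
      (⨆ i, |(Ghat *ᵥ βhat - ghat) i|) ≤ lam →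
      (∀ b : Fin N → ℝ, (⨆ i, |(Ghat *ᵥ b - ghat) i|) ≤ lam → ∑ i, |βhat i| ≤ ∑ i, |b i|) →
      (∑ i, |βhat i| ≤ ∑ i, |β i| ∧ (⨆ i, |(G *ᵥ (βhat - β)) i|) ≤ 2 * lam) :=
  stmt8_general N Ghat G ghat g β hβ lam hcond
end

section
/- Let G ≥ 1 be an integer, κ ∈ ℤ, let 𝔾₀, 𝔾₁ ∈ ℝ^{N×N} and β₀, β₁ ∈ ℝ^{N×p}, and set 𝕘₀ = 𝔾₀β₀ and 𝕘₁ = 𝔾₁β₁. Define the piecewise constant sequences (𝔾_t, 𝕘_t) = (𝔾₀, 𝕘₀) for t ≤ κ and (𝔾_t, 𝕘_t) = (𝔾₁, 𝕘₁) for t > κ, and the windowed averages 𝔾_v(G) = G^{−1} Σ_{t=v−G+1}^{v} 𝔾_t and 𝕘_v(G) = G^{−1} Σ_{t=v−G+1}^{v} 𝕘_t. Then for every β̂ ∈ ℝ^{N×p} and every v ∈ ℤ, (𝔾_v(G)β̂ − 𝕘_v(G)) − (𝔾_{v+G}(G)β̂ − 𝕘_{v+G}(G)) = (max(G − |v − κ|,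 0)/G) (𝔾₀(β̂ − β₀) − 𝔾₁(β̂ − β₁)). Consequently T*_v := |(𝔾_v(G)β̂ − 𝕘_v(G)) − (𝔾_{v+G}(G)β̂ − 𝕘_{v+G}(G))|_∞ vanishes whenever |v − κ| ≥ G, attains its maximum over v at v = κ, and T*_κ > 0 if and only if 𝔾₀(β̂ − β₀) ≠ 𝔾₁(β̂ − β₁). -/
noncomputable section

namespace Stmt12Aux

lemma entry_le_sup {N p : ℕ} [NeZero N] [NeZero p] (M : Matrix (Fin N) (Fin p) ℝ)
    (i : Fin N) (j : Fin p) : |M i j| ≤ ⨆ i, ⨆ j, |M i j| := by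
  have h1 : |M i j| ≤ ⨆ j, |M i j| :=
    le_ciSup (f := fun j => |M i j|) (Set.finite_range _).bddAbove j
  exact h1.trans (le_ciSup (f := fun i => ⨆ j, |M i j|) (Set.finite_range _).bddAbove i)

lemma sup_zero {N p : ℕ} [NeZero N] [NeZero p] :
    (⨆ i, ⨆ j, |(0 : Matrix (Fin N) (Fin p) ℝ) i j|) = 0 := by
  simp [ciSup_const]

lemma sup_smul_le {N p : ℕ} [NeZero N] [NeZero p] (c : ℝ) (hc0 : 0 ≤ c) (hc1 : c ≤ 1)
    (M : Matrix (Fin N) (Fin p) ℝ) :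
    (⨆ i, ⨆ j, |(c • M) i j|) ≤ ⨆ i, ⨆ j, |M i j| := by
  refine ciSup_le fun i => ciSup_le fun j => ?_
  have : |(c • M) i j| = c * |M i j| := by
    simp [Matrix.smul_apply, abs_mul, abs_of_nonneg hc0]
  rw [this]
  calc c * |M i j| ≤ 1 * |M i j| := by nlinarith [abs_nonneg (M i j)]
  _ = |M i j| := one_mul _
  _ ≤ _ := entry_le_sup M i j

lemma sup_pos_iff {N p : ℕ} [NeZero N] [NeZero p] (M : Matrix (Fin N) (Fin p) ℝ) :
    0 < (⨆ i, ⨆ j, |M i j|) ↔ M ≠ 0 := by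
  constructor
  · rintro h rfl
    rw [sup_zero] at h; exact lt_irrefl _ h
  · intro h
    obtain ⟨i, j, hij⟩ : ∃ i j, M i j ≠ 0 := by
      by_contra hc
      push_neg at hc
      exact h (by ext i j; simp [hc])
    exact lt_of_lt_of_le (abs_pos.mpr hij) (entry_le_sup M i j)

lemma Icc_inter (a b c d : ℤ) :
    Finset.Icc a b ∩ Finset.Icc c d = Finset.Icc (a ⊔ c) (b ⊓ d) := by
  ext t
  simp only [Finset.mem_inter, Finset.mem_Icc]
  omega

end Stmt12Aux

open Stmt12Aux in
/-- Tent-shape property of the Stage-2 population detector statistic (Section 3.2 of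
the paper): with Yule–Walker pairs `(𝔾₀, 𝕘₀)` and `(𝔾₁, 𝕘₁)` (where `𝕘ₖ = 𝔾ₖβₖ`)
before and after a single change at `κ`, the windowed-average contrast equals
`(max(G−|v−κ|,0)/G)(𝔾₀(β̂−β₀) − 𝔾₁(β̂−β₁))` for any inspection parameter `β̂`;
hence `T*_v` vanishes for `|v−κ| ≥ G`, attains its maximum at `v = κ`, and
`T*_κ > 0` iff `𝔾₀(β̂−β₀) ≠ 𝔾₁(β̂−β₁)`. -/
theorem stmt12 (N p : ℕ) (hN : 1 ≤ N) (hp : 1 ≤ p) (G : ℕ) (hG : 1 ≤ G) (κ : ℤ)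
    (G₀ G₁ : Matrix (Fin N) (Fin N) ℝ) (β₀ β₁ : Matrix (Fin N) (Fin p) ℝ) :
    let g₀ : Matrix (Fin N) (Fin p) ℝ := G₀ * β₀
    let g₁ : Matrix (Fin N) (Fin p) ℝ := G₁ * β₁
    let Gt : ℤ → Matrix (Fin N) (Fin N) ℝ := fun t => if t ≤ κ then G₀ else G₁
    let gt : ℤ → Matrix (Fin N) (Fin p) ℝ := fun t => if t ≤ κ then g₀ else g₁
    let GW : ℤ → Matrix (Fin N) (Fin N) ℝ :=
      fun v => (G : ℝ)⁻¹ • ∑ t ∈ Finset.Icc (v - (G : ℤ) + 1) v, Gt t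
    let gW : ℤ → Matrix (Fin N) (Fin p) ℝ :=
      fun v => (G : ℝ)⁻¹ • ∑ t ∈ Finset.Icc (v - (G : ℤ) + 1) v, gt t
    ∀ βhat : Matrix (Fin N) (Fin p) ℝ,
      (∀ v : ℤ, (GW v * βhat - gW v) - (GW (v + (G : ℤ)) * βhat - gW (v + (G : ℤ))) =
          ((max ((G : ℝ) - |((v - κ : ℤ) : ℝ)|) 0) / (G : ℝ)) •
            (G₀ * (βhat - β₀) - G₁ * (βhat - β₁))) ∧
      (∀ v : ℤ, (G : ℤ) ≤ |v - κ| →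
          (⨆ i, ⨆ j,
            |((GW v * βhat - gW v) - (GW (v + (G : ℤ)) * βhat - gW (v + (G : ℤ)))) i j|) = 0) ∧
      (∀ v : ℤ,
          (⨆ i, ⨆ j,
            |((GW v * βhat - gW v) - (GW (v + (G : ℤ)) * βhat - gW (v + (G : ℤ)))) i j|) ≤
          (⨆ i, ⨆ j,
            |((GW κ * βhat - gW κ) - (GW (κ + (G : ℤ)) * βhat - gW (κ + (G : ℤ)))) i j|)) ∧
      (0 < (⨆ i, ⨆ j,
            |((GW κ * βhat - gW κ) - (GW (κ + (G : ℤ)) * βhat - gW (κ + (G : ℤ)))) i j|) ↔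
          G₀ * (βhat - β₀) ≠ G₁ * (βhat - β₁)) := by
  intro g₀ g₁ Gt gt GW gW βhat
  haveI : NeZero N := ⟨by omega⟩
  haveI : NeZero p := ⟨by omega⟩
  set X : Matrix (Fin N) (Fin p) ℝ := G₀ * (βhat - β₀) - G₁ * (βhat - β₁) with hX
  have hGR : (0:ℝ) < G := by exact_mod_cast Nat.lt_of_lt_of_le Nat.zero_lt_one hG
  set r : ℤ → ℝ := fun v => (max ((G : ℝ) - |((v - κ : ℤ) : ℝ)|) 0) / (G : ℝ) with hr
  have key : ∀ v : ℤ, (GW v * βhat - gW v) - (GW (v + (G:ℤ)) * βhat - gW (v + (G:ℤ)))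
      = r v • X := by
    intro v
    have hD : ∀ w : ℤ, GW w * βhat - gW w
        = (G:ℝ)⁻¹ • ∑ t ∈ Finset.Icc (w - (G:ℤ) + 1) w, (Gt t * βhat - gt t) := by
      intro w
      simp only [GW, gW, Matrix.smul_mul, ← smul_sub, Finset.sum_sub_distrib]
      rw [Matrix.sum_mul]
    rw [hD, hD, ← smul_sub]
    have hb : v + (G:ℤ) - (G:ℤ) + 1 = (v - (G:ℤ) + 1) + G := by ring
    have hshift : ∑ t ∈ Finset.Icc (v + (G:ℤ) - (G:ℤ) + 1) (v + (G:ℤ)),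
          (Gt t * βhat - gt t)
        = ∑ t ∈ Finset.Icc (v - (G:ℤ) + 1) v, (Gt (t + G) * βhat - gt (t + G)) := by
      rw [hb, ← Finset.map_add_right_Icc, Finset.sum_map]
      rfl
    rw [hshift, ← Finset.sum_sub_distrib]
    have hpt : ∀ t : ℤ, (Gt t * βhat - gt t) - (Gt (t + G) * βhat - gt (t + G))
        = if t ∈ Finset.Icc (κ - (G:ℤ) + 1) κ then X else 0 := by
      intro t
      by_cases h1 : t ≤ κ
      · by_cases h2 : t + (G:ℤ) ≤ κ
        · have : t ∉ Finset.Icc (κ - (G:ℤ) + 1) κ := by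
            simp only [Finset.mem_Icc]; omega
          simp [Gt, gt, h1, h2, this]
        · have hmem : t ∈ Finset.Icc (κ - (G:ℤ) + 1) κ := by
            simp only [Finset.mem_Icc]; omega
          simp only [Gt, gt, if_pos h1, if_neg h2, if_pos hmem, hX, g₀, g₁]
          rw [Matrix.mul_sub, Matrix.mul_sub]
      · have h2 : ¬ (t + (G:ℤ) ≤ κ) := by omega
        have : t ∉ Finset.Icc (κ - (G:ℤ) + 1) κ := by
          simp only [Finset.mem_Icc]; omega
        simp [Gt, gt, h1, h2, this]
    rw [Finset.sum_congr rfl (fun t _ => hpt t), Finset.sum_ite_mem, Finset.sum_const,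
      Icc_inter, Int.card_Icc]
    have hcard : v ⊓ κ + 1 - (v - (G:ℤ) + 1) ⊔ (κ - (G:ℤ) + 1) = (G:ℤ) - |v - κ| := by
      rcases abs_cases (v - κ) with ⟨ha, _⟩ | ⟨ha, _⟩ <;> omega
    rw [hcard, ← Nat.cast_smul_eq_nsmul ℝ, smul_smul]
    congr 1
    have h1 : (((G:ℤ) - |v - κ|).toNat : ℝ) = max ((G : ℝ) - |((v - κ : ℤ) : ℝ)|) 0 := by
      have h2 : ((((G:ℤ) - |v - κ|).toNat : ℤ) : ℝ) = ((max ((G:ℤ) - |v - κ|) 0 : ℤ) : ℝ) := by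
        rw [Int.toNat_eq_max]
      push_cast at h2 ⊢
      rw [h2]
    rw [h1]
    show _ = (max ((G : ℝ) - |((v - κ : ℤ) : ℝ)|) 0) / (G : ℝ)
    field_simp
  refine ⟨key, ?_, ?_, ?_⟩
  · intro v hv
    rw [key v]
    have hr0 : r v = 0 := by
      show (max ((G : ℝ) - |((v - κ : ℤ) : ℝ)|) 0) / (G : ℝ) = 0
      have h2 : ((G:ℤ) : ℝ) ≤ ((|v - κ| : ℤ) : ℝ) := Int.cast_le.mpr hv
      rw [Int.cast_abs] at h2
      have h3 : (G:ℝ) - |((v - κ : ℤ) : ℝ)| ≤ 0 := by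
        push_cast at h2 ⊢
        linarith
      rw [max_eq_right h3, zero_div]
    rw [hr0, zero_smul]
    exact sup_zero
  · intro v
    rw [key v, key κ]
    have hrκ : r κ = 1 := by
      show (max ((G : ℝ) - |((κ - κ : ℤ) : ℝ)|) 0) / (G : ℝ) = 1
      simp only [sub_self, Int.cast_zero, abs_zero, sub_zero]
      rw [max_eq_left hGR.le]
      field_simp
    rw [hrκ, one_smul]
    refine sup_smul_le _ ?_ ?_ X
    · show 0 ≤ (max ((G : ℝ) - |((v - κ : ℤ) : ℝ)|) 0) / (G : ℝ); positivity
    · show (max ((G : ℝ) - |((v - κ : ℤ) : ℝ)|) 0) / (G : ℝ) ≤ 1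
      rw [div_le_one hGR]
      calc max ((G : ℝ) - |((v - κ : ℤ) : ℝ)|) 0 ≤ max ((G:ℝ)) 0 := by
            apply max_le_max _ le_rfl
            have := abs_nonneg (((v - κ : ℤ) : ℝ)); linarith
      _ = (G:ℝ) := max_eq_left hGR.le
  · rw [key κ]
    have hrκ : r κ = 1 := by
      show (max ((G : ℝ) - |((κ - κ : ℤ) : ℝ)|) 0) / (G : ℝ) = 1
      simp only [sub_self, Int.cast_zero, abs_zero, sub_zero]
      rw [max_eq_left hGR.le]
      field_simp
    rw [hrκ, one_smul]
    rw [sup_pos_iff]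
    constructor
    · intro h hc; exact h (by rw [hX, hc, sub_self])
    · intro h hc; exact h (by rwa [hX, sub_eq_zero] at hc)
end
end
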